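/- Fix σ > 0 and x ∈ ℝ. For 0 < q < 1 let d(q) = 2(2−q)/(1−q) + 1 and define the q-Gaussian density f(x; q) = [ Γ((2−q)/(1−q) + 1/2) / ( Γ((2−q)/(1−q)) · σ · √(π·d(q)) ) ] · (max(0, 1 − x²/(d(q)σ²)))^{1/(1−q)}. Then lim_{q→1⁻} f(x; q) = (1/(σ√(2π))) · exp(−x²/(2σ²)), i.e. the q-Gaussian densities with q < 1 converge pointwise to the Gaussian density with variance σ² as q tends to 1 from below. -/

import Mathlib

/-!
Substituting `ν = (2 - q) / (1 - q)`, which tends to `∞` as `q → 1⁻`, the density becomes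
`Γ(ν + 1/2) / (Γ(ν) σ √(π (2ν + 1))) · (1 - x² / ((2ν + 1) σ²))₊ ^ (ν - 1)`.
Log-convexity of `Γ` squeezes `Γ(ν + 1/2) / (Γ(ν) √ν)` between `√(ν / (ν + 1/2))` and `1`,
so the prefactor tends to `1 / (σ √(2π))`, while `(1 + t / n) ^ n → exp t` turns the power
into `exp (-x² / (2σ²))`.
-/

open Real Filter

/-- The q-Gaussian density for q < 1. -/
noncomputable def qGaussianLow (σ : ℝ) (q : ℝ) (x : ℝ) : ℝ :=
  Real.Gamma ((2 - q)/(1 - q) + 1/2) /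
      (Real.Gamma ((2 - q)/(1 - q)) * σ * Real.sqrt (Real.pi * (2*(2 - q)/(1 - q) + 1))) *
    (max 0 (1 - x^2/((2*(2 - q)/(1 - q) + 1) * σ^2)))^(1/(1 - q))

open Topology

namespace Real

theorem Gamma_add_div_two_le_sqrt_mul {s t : ℝ} (hs : 0 < s) (ht : 0 < t) :
    Gamma ((s + t) / 2) ≤ √(Gamma s * Gamma t) := by
  have h := Gamma_mul_add_mul_le_rpow_Gamma_mul_rpow_Gamma hs ht
    (a := 1 / 2) (b := 1 / 2) (by norm_num) (by norm_num) (by norm_num)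
  rwa [← sqrt_eq_rpow, ← sqrt_eq_rpow, ← sqrt_mul (Gamma_pos_of_pos hs).le,
    show 1 / 2 * s + 1 / 2 * t = (s + t) / 2 by ring] at h

theorem Gamma_add_half_le {x : ℝ} (hx : 0 < x) : Gamma (x + 1 / 2) ≤ Gamma x * √x := by
  have h := Gamma_add_div_two_le_sqrt_mul hx (by linarith : 0 < x + 1)
  rwa [show (x + (x + 1)) / 2 = x + 1 / 2 by ring, Gamma_add_one hx.ne',
    show Gamma x * (x * Gamma x) = Gamma x ^ 2 * x by ring,
    sqrt_mul (sq_nonneg _), sqrt_sq (Gamma_pos_of_pos hx).le] at h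

theorem mul_Gamma_le_Gamma_add_half {x : ℝ} (hx : 0 < x) :
    x * Gamma x ≤ Gamma (x + 1 / 2) * √(x + 1 / 2) := by
  have hx' : 0 < x + 1 / 2 := by linarith
  have h := Gamma_add_div_two_le_sqrt_mul hx' (by linarith : 0 < x + 1 / 2 + 1)
  rwa [show (x + 1 / 2 + (x + 1 / 2 + 1)) / 2 = x + 1 by ring, Gamma_add_one hx.ne',
    Gamma_add_one hx'.ne',
    show Gamma (x + 1 / 2) * ((x + 1 / 2) * Gamma (x + 1 / 2)) =
      Gamma (x + 1 / 2) ^ 2 * (x + 1 / 2) by ring,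
    sqrt_mul (sq_nonneg _), sqrt_sq (Gamma_pos_of_pos hx').le] at h

theorem tendsto_Gamma_add_half_div_Gamma_mul_sqrt :
    Tendsto (fun x => Gamma (x + 1 / 2) / (Gamma x * √x)) atTop (𝓝 1) := by
  have hlower : Tendsto (fun x : ℝ => √(x / (x + 1 / 2))) atTop (𝓝 1) := by
    have h : Tendsto (fun x : ℝ => √((1 + (2 * x)⁻¹)⁻¹)) atTop (𝓝 1) := by
      simpa using (((tendsto_id.const_mul_atTop two_pos).inv_tendsto_atTop.const_add 1).inv₀
        (by norm_num)).sqrt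
    refine h.congr' ?_
    filter_upwards [eventually_gt_atTop 0] with x hx
    field_simp
  refine tendsto_of_tendsto_of_tendsto_of_le_of_le' hlower tendsto_const_nhds ?_ ?_
  all_goals filter_upwards [eventually_gt_atTop 0] with x hx
  all_goals have hΓ : 0 < Gamma x * √x := mul_pos (Gamma_pos_of_pos hx) (sqrt_pos.2 hx)
  · have hs : 0 < √(x + 1 / 2) := sqrt_pos.2 (by linarith)
    rw [le_div_iff₀ hΓ]
    calc √(x / (x + 1 / 2)) * (Gamma x * √x) = x * Gamma x / √(x + 1 / 2) := by
          rw [sqrt_div hx.le]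
          field_simp
          rw [sq_sqrt hx.le]
      _ ≤ Gamma (x + 1 / 2) := (div_le_iff₀ hs).2 (mul_Gamma_le_Gamma_add_half hx)
  · exact (div_le_one hΓ).2 (Gamma_add_half_le hx)

end Real

theorem tendsto_one_add_div_rpow_of_tendsto {α : Type*} {l : Filter α} {f g : α → ℝ} {r : ℝ}
    (hg : Tendsto g l atTop) (hfg : Tendsto (fun a => f a / g a) l (𝓝 r)) (c : ℝ) :
    Tendsto (fun a => (1 + c / g a) ^ f a) l (𝓝 (exp (c * r))) := by
  rw [exp_mul]
  refine (((tendsto_one_add_div_rpow_exp c).comp hg).rpow hfg (.inl (exp_ne_zero c))).congr' ?_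
  filter_upwards [hg.eventually_gt_atTop 0, hg.eventually_ge_atTop |c|] with a hpos hc
  have hbase : 0 ≤ 1 + c / g a := by
    have : |c / g a| ≤ 1 := by
      rw [abs_div, abs_of_pos hpos]
      exact div_le_one_of_le₀ hc hpos.le
    linarith [neg_abs_le (c / g a)]
  rw [Function.comp_apply, ← rpow_mul hbase, mul_div_cancel₀ _ hpos.ne']

theorem tendsto_two_sub_div_one_sub_nhdsLT_one :
    Tendsto (fun q : ℝ => (2 - q) / (1 - q)) (𝓝[<] 1) atTop := by
  have h : Tendsto (fun q : ℝ => 1 - q) (𝓝[<] 1) (𝓝[>] 0) := by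
    refine tendsto_nhdsWithin_iff.2 ⟨?_, ?_⟩
    · rw [← sub_self (1 : ℝ)]
      exact (tendsto_const_nhds.sub tendsto_id).mono_left nhdsWithin_le_nhds
    · filter_upwards [self_mem_nhdsWithin] with q (hq : q < 1)
      exact sub_pos.2 hq
  refine (tendsto_atTop_add_const_left _ 1 h.inv_tendsto_nhdsGT_zero).congr' ?_
  filter_upwards [self_mem_nhdsWithin] with q (hq : q < 1)
  have : 1 - q ≠ 0 := (sub_pos.2 hq).ne'
  show 1 + (1 - q)⁻¹ = (2 - q) / (1 - q)
  field_simp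
  ring

/-- The q-Gaussian with q < 1 is the Pearson type II (symmetric beta) density, parametrised here
by `ν = (2 - q) / (1 - q)`, so that its exponent `1 / (1 - q)` is `ν - 1` and `d(q) = 2ν + 1`. -/
noncomputable def pearsonIIDensity (σ ν x : ℝ) : ℝ :=
  Gamma (ν + 1 / 2) / (Gamma ν * σ * √(π * (2 * ν + 1))) *
    (max 0 (1 - x ^ 2 / ((2 * ν + 1) * σ ^ 2))) ^ (ν - 1)

theorem qGaussianLow_eq_pearsonIIDensity (σ x : ℝ) {q : ℝ} (hq : q ≠ 1) :
    qGaussianLow σ q x = pearsonIIDensity σ ((2 - q) / (1 - q)) x := by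
  have : 1 - q ≠ 0 := sub_ne_zero.2 hq.symm
  rw [qGaussianLow, pearsonIIDensity, mul_div_assoc,
    show (2 - q) / (1 - q) - 1 = 1 / (1 - q) by field_simp; ring]

theorem tendsto_pearsonIIDensity_normalizer (σ : ℝ) :
    Tendsto (fun ν => Gamma (ν + 1 / 2) / (Gamma ν * σ * √(π * (2 * ν + 1)))) atTop
      (𝓝 (1 / (σ * √(2 * π)))) := by
  have h : Tendsto (fun ν : ℝ => σ⁻¹ * (√(π * (2 + ν⁻¹)))⁻¹) atTop
      (𝓝 (1 / (σ * √(2 * π)))) := by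
    have := (((tendsto_inv_atTop_zero.const_add 2).const_mul π).sqrt.inv₀
      (by positivity)).const_mul σ⁻¹
    simpa [mul_comm 2 π, mul_inv, mul_comm σ⁻¹] using this
  have hprod := tendsto_Gamma_add_half_div_Gamma_mul_sqrt.mul h
  rw [one_mul] at hprod
  refine hprod.congr' ?_
  filter_upwards [eventually_gt_atTop 0] with ν hν
  have hsplit : √(π * (2 * ν + 1)) = √(π * (2 + ν⁻¹)) * √ν := by
    rw [← sqrt_mul (by positivity)]
    congr 1
    field_simp
  rw [hsplit]
  field_simp

theorem tendsto_pearsonIIDensity_kernel (σ x : ℝ) :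
    Tendsto (fun ν : ℝ => (max 0 (1 - x ^ 2 / ((2 * ν + 1) * σ ^ 2))) ^ (ν - 1)) atTop
      (𝓝 (exp (-x ^ 2 / (2 * σ ^ 2)))) := by
  have hd : Tendsto (fun ν : ℝ => 2 * ν + 1) atTop atTop :=
    tendsto_atTop_add_const_right _ 1 (tendsto_id.const_mul_atTop two_pos)
  have hexponent : Tendsto (fun ν : ℝ => (ν - 1) / (2 * ν + 1)) atTop (𝓝 (1 / 2)) := by
    have := (tendsto_const_nhds (x := (1 / 2 : ℝ))).sub
      ((tendsto_const_nhds (x := (3 / 2 : ℝ))).div_atTop hd)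
    rw [sub_zero] at this
    refine this.congr' ?_
    filter_upwards [eventually_gt_atTop 0] with ν hν
    field_simp
    ring
  have h := tendsto_one_add_div_rpow_of_tendsto hd hexponent (-(x ^ 2 / σ ^ 2))
  rw [show -(x ^ 2 / σ ^ 2) * (1 / 2) = -x ^ 2 / (2 * σ ^ 2) by ring] at h
  refine h.congr' ?_
  filter_upwards [hd.eventually_ge_atTop (x ^ 2 / σ ^ 2), eventually_gt_atTop 0] with ν hc hν
  rw [show x ^ 2 / ((2 * ν + 1) * σ ^ 2) = x ^ 2 / σ ^ 2 / (2 * ν + 1) by rw [div_div, mul_comm],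
    neg_div, ← sub_eq_add_neg, max_eq_right (sub_nonneg.2 ?_)]
  exact div_le_one_of_le₀ hc (by positivity)

theorem tendsto_pearsonIIDensity (σ x : ℝ) :
    Tendsto (fun ν => pearsonIIDensity σ ν x) atTop
      (𝓝 (1 / (σ * √(2 * π)) * exp (-x ^ 2 / (2 * σ ^ 2)))) :=
  (tendsto_pearsonIIDensity_normalizer σ).mul (tendsto_pearsonIIDensity_kernel σ x)

theorem qGaussianLow_tendsto_gaussian_general (σ : ℝ) (x : ℝ) :
    Filter.Tendsto (fun q : ℝ => qGaussianLow σ q x)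
      (nhdsWithin 1 (Set.Ioo (0 : ℝ) 1))
      (nhds (1/(σ * Real.sqrt (2*Real.pi)) * Real.exp (-x^2/(2*σ^2)))) := by
  have hindex := tendsto_two_sub_div_one_sub_nhdsLT_one.mono_left
    (nhdsWithin_mono 1 (Set.Ioo_subset_Iio_self (a := 0)))
  refine ((tendsto_pearsonIIDensity σ x).comp hindex).congr' ?_
  filter_upwards [self_mem_nhdsWithin] with q hq
  exact (qGaussianLow_eq_pearsonIIDensity σ x hq.2.ne).symm

theorem qGaussianLow_tendsto_gaussian (σ : ℝ) (hσ : 0 < σ) (x : ℝ) :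
    Filter.Tendsto (fun q : ℝ => qGaussianLow σ q x)
      (nhdsWithin 1 (Set.Ioo (0 : ℝ) 1))
      (nhds (1/(σ * Real.sqrt (2*Real.pi)) * Real.exp (-x^2/(2*σ^2)))) :=
  qGaussianLow_tendsto_gaussian_general σ x
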